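/- arXiv:math/0701814 — 4 statements merged into one kernel-verified Lean document; each statement's English description precedes it below -/
import Mathlib

section
/- Let μ be a nonnegative Borel measure on ℂ, finite on compacts, satisfying μ(B(0, R+1)) − μ(B(0, R)) = o(R) as R → ∞. Fix z ∈ ℂ. If the limit L = lim_{R→∞} ∫_{|w|<R} (log⁺|z − w| − log⁺|w|) dμ(w) exists and is finite, then L = ∫₁^∞ (μ(B(0,t)) − μ(B(z,t)))/t dt. -/
/-!
Layer cake: for a finite measure `ν`,
`∫ log⁺ (dist w c) dν(w) = ∫₁^∞ ν{w | t < dist w c} / t dt`.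
Applied to the restriction `μ_R` of `μ` to the ball `B(0, R + |z| + 1)`, the difference of two
such identities turns the truncated potential into
`∫₁^∞ (μ_R(B(0,t)) - μ_R(B(z,t))) / t dt`. For `t ≤ R` the restriction is invisible. For `t > R`
the integrand vanishes beyond `R + 2|z| + 1` and is bounded by the mass of the annulus
`R - |z| < |w| ≤ R + |z| + 1` divided by `R`, since the two balls differ only inside that
annulus; a telescoping sum of unit shells makes this `o(1)`.
-/

open Real Filter MeasureTheory Asymptotics
open Metric Set
open scoped symmDiff

section LayerCake

variable {α : Type*} [MeasurableSpace α] {ν : Measure α} {f : α → ℝ}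

lemma intervalIntegral_indicator_Ioi_one_inv {s : ℝ} (hs : 0 ≤ s) :
    ∫ t in (0 : ℝ)..s, (Ioi 1).indicator (fun t => t⁻¹) t = log⁺ s := by
  rw [intervalIntegral.integral_of_le hs, setIntegral_indicator measurableSet_Ioi, Ioc_inter_Ioi,
    max_eq_right zero_le_one]
  rcases le_or_gt s 1 with hs1 | hs1
  · rw [Ioc_eq_empty hs1.not_gt, Measure.restrict_empty, integral_zero_measure, eq_comm,
      posLog_eq_zero_iff, abs_of_nonneg hs]
    exact hs1
  · rw [← intervalIntegral.integral_of_le hs1.le, integral_inv_of_pos one_pos (by linarith),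
      div_one, posLog_eq_log (by rw [abs_of_nonneg hs]; exact hs1.le)]

lemma intervalIntegrable_indicator_Ioi_one_inv (s : ℝ) :
    IntervalIntegrable ((Ioi 1).indicator fun t : ℝ => t⁻¹) volume 0 s := by
  refine (intervalIntegrable_const (c := (1 : ℝ))).mono_fun'
    (measurable_inv.indicator measurableSet_Ioi).aestronglyMeasurable (.of_forall fun t => ?_)
  by_cases ht : t ∈ Ioi 1
  · simp only [indicator_of_mem ht, norm_inv, Real.norm_eq_abs]
    exact inv_le_one_of_one_le₀ (ht.le.trans (le_abs_self t))
  · simp [indicator_of_notMem ht]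

lemma measureReal_lt_div_nonneg_ae :
    0 ≤ᵐ[volume.restrict (Ioi 1)] fun t : ℝ => ν.real {a | t < f a} / t := by
  filter_upwards [ae_restrict_mem measurableSet_Ioi] with t ht
  exact div_nonneg measureReal_nonneg (zero_le_one.trans ht.le)

variable [IsFiniteMeasure ν]

lemma lintegral_ofReal_posLog_eq_lintegral_measureReal_lt_div (hf₀ : 0 ≤ᵐ[ν] f)
    (hf : AEMeasurable f ν) :
    ∫⁻ a, ENNReal.ofReal (log⁺ (f a)) ∂ν =
      ∫⁻ t in Ioi 1, ENNReal.ofReal (ν.real {a | t < f a} / t) := by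
  have key := lintegral_comp_eq_lintegral_meas_lt_mul ν hf₀ hf
    (fun s _ => intervalIntegrable_indicator_Ioi_one_inv s)
    (.of_forall fun t => indicator_nonneg (fun t ht => inv_nonneg.2 (zero_le_one.trans ht.le)) t)
  have hg : ∀ t, ν {a | t < f a} * ENNReal.ofReal ((Ioi 1).indicator (fun t => t⁻¹) t) =
      (Ioi 1).indicator (fun t => ENNReal.ofReal (ν.real {a | t < f a} / t)) t := by
    intro t
    by_cases ht : t ∈ Ioi 1
    · rw [indicator_of_mem ht, indicator_of_mem ht, div_eq_mul_inv,
        ENNReal.ofReal_mul measureReal_nonneg, ofReal_measureReal]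
    · simp [indicator_of_notMem ht]
  simp_rw [hg] at key
  rw [lintegral_indicator measurableSet_Ioi, Measure.restrict_restrict measurableSet_Ioi,
    Ioi_inter_Ioi, max_eq_left zero_le_one] at key
  rw [← key]
  refine lintegral_congr_ae (hf₀.mono fun a ha => ?_)
  simp only [intervalIntegral_indicator_Ioi_one_inv ha]

lemma measurable_measureReal_lt_div :
    Measurable fun t : ℝ => ν.real {a | t < f a} / t := by
  have hanti : Antitone fun t : ℝ => ν.real {a | t < f a} := fun s t hst =>
    measureReal_mono fun a (ha : t < f a) => hst.trans_lt ha
  exact hanti.measurable.div measurable_id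

lemma integral_posLog_eq_integral_measureReal_lt_div (hf₀ : 0 ≤ᵐ[ν] f)
    (hf : AEMeasurable f ν) :
    ∫ a, log⁺ (f a) ∂ν = ∫ t in Ioi 1, ν.real {a | t < f a} / t := by
  rw [integral_eq_lintegral_of_nonneg_ae (.of_forall fun _ => posLog_nonneg)
      (continuous_posLog.measurable.comp_aemeasurable hf).aestronglyMeasurable,
    integral_eq_lintegral_of_nonneg_ae measureReal_lt_div_nonneg_ae
      measurable_measureReal_lt_div.aestronglyMeasurable,
    lintegral_ofReal_posLog_eq_lintegral_measureReal_lt_div hf₀ hf]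

lemma integrableOn_measureReal_lt_div (hf₀ : 0 ≤ᵐ[ν] f) (hf : AEMeasurable f ν)
    (hint : Integrable (fun a => log⁺ (f a)) ν) :
    IntegrableOn (fun t => ν.real {a | t < f a} / t) (Ioi 1) := by
  rw [IntegrableOn, ← lintegral_ofReal_ne_top_iff_integrable
      measurable_measureReal_lt_div.aestronglyMeasurable measureReal_lt_div_nonneg_ae,
    ← lintegral_ofReal_posLog_eq_lintegral_measureReal_lt_div hf₀ hf]
  exact (lintegral_ofReal_ne_top_iff_integrable hint.1 (.of_forall fun _ => posLog_nonneg)).2 hint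

end LayerCake

section Metric

variable {X : Type*} [PseudoMetricSpace X] [MeasurableSpace X] [OpensMeasurableSpace X]
  {ν : Measure X} [IsFiniteMeasure ν]

lemma measureReal_setOf_lt_dist (c : X) (t : ℝ) :
    ν.real {w | t < dist w c} = ν.real univ - ν.real (closedBall c t) := by
  rw [← measureReal_compl measurableSet_closedBall]
  congr 1
  ext w
  simp

lemma integrable_posLog_dist {s : Set X} (hs : Bornology.IsBounded s)
    (hν : ∀ᵐ w ∂ν, w ∈ s) (c : X) : Integrable (fun w => log⁺ (dist w c)) ν := by
  obtain ⟨r, hr⟩ := hs.subset_closedBall c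
  refine .of_bound (by fun_prop) (log⁺ r) (hν.mono fun w hw => ?_)
  rw [norm_of_nonneg posLog_nonneg]
  exact posLog_le_posLog dist_nonneg (hr hw)

lemma integral_posLog_dist (c : X) :
    ∫ w, log⁺ (dist w c) ∂ν =
      ∫ t in Ioi 1, (ν.real univ - ν.real (closedBall c t)) / t := by
  simp_rw [← measureReal_setOf_lt_dist]
  exact integral_posLog_eq_integral_measureReal_lt_div (.of_forall fun _ => dist_nonneg)
    (by fun_prop)

lemma integrableOn_measureReal_univ_sub_closedBall_div {c : X}
    (hint : Integrable (fun w => log⁺ (dist w c)) ν) :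
    IntegrableOn (fun t => (ν.real univ - ν.real (closedBall c t)) / t) (Ioi 1) := by
  simp_rw [← measureReal_setOf_lt_dist]
  exact integrableOn_measureReal_lt_div (.of_forall fun _ => dist_nonneg) (by fun_prop) hint

theorem integral_posLog_dist_sub_posLog_dist {a b : X}
    (ha : Integrable (fun w => log⁺ (dist w a)) ν)
    (hb : Integrable (fun w => log⁺ (dist w b)) ν) :
    ∫ w, (log⁺ (dist w b) - log⁺ (dist w a)) ∂ν =
      ∫ t in Ioi 1, (ν.real (closedBall a t) - ν.real (closedBall b t)) / t := by
  rw [integral_sub hb ha, integral_posLog_dist, integral_posLog_dist,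
    ← integral_sub (integrableOn_measureReal_univ_sub_closedBall_div hb)
      (integrableOn_measureReal_univ_sub_closedBall_div ha)]
  congr 1
  ext t
  ring

lemma integrableOn_measureReal_closedBall_sub_div {a b : X}
    (ha : Integrable (fun w => log⁺ (dist w a)) ν)
    (hb : Integrable (fun w => log⁺ (dist w b)) ν) :
    IntegrableOn (fun t => (ν.real (closedBall a t) - ν.real (closedBall b t)) / t) (Ioi 1) :=
  ((integrableOn_measureReal_univ_sub_closedBall_div hb).sub
    (integrableOn_measureReal_univ_sub_closedBall_div ha)).congr_fun
      (fun t _ => by simp only [Pi.sub_apply]; ring) measurableSet_Ioi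

end Metric

lemma closedBall_symmDiff_closedBall_subset {X : Type*} [PseudoMetricSpace X] (x y : X) (t : ℝ) :
    closedBall x t ∆ closedBall y t ⊆
      closedBall x (t + dist y x) \ closedBall x (t - dist y x) := by
  have hd := dist_nonneg (x := y) (y := x)
  rintro w (⟨hx, hy⟩ | ⟨hy, hx⟩) <;>
    simp only [Set.mem_sdiff, mem_closedBall, not_le] at hx hy ⊢
  · constructor <;> linarith [dist_triangle w x y, dist_comm x y]
  · constructor <;> linarith [dist_triangle w y x]

section Truncation

variable {X : Type*} [PseudoMetricSpace X] [MeasurableSpace X] [OpensMeasurableSpace X]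
  (μ : Measure X) {a b : X} {ρ R t : ℝ}

lemma measureReal_restrict_ball_closedBall {c : X} (h : t + dist c a < ρ) :
    (μ.restrict (ball a ρ)).real (closedBall c t) = μ.real (closedBall c t) := by
  rw [measureReal_restrict_apply measurableSet_closedBall,
    inter_eq_left.2 (closedBall_subset_ball' h)]

variable [ProperSpace X] [IsFiniteMeasureOnCompacts μ]

lemma abs_measureReal_restrict_ball_closedBall_sub_le :
    |(μ.restrict (ball a ρ)).real (closedBall a t)
        - (μ.restrict (ball a ρ)).real (closedBall b t)|
      ≤ μ.real ((closedBall a (t + dist b a) \ closedBall a (t - dist b a)) ∩ ball a ρ) := by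
  have : IsFiniteMeasure (μ.restrict (ball a ρ)) :=
    isFiniteMeasure_restrict.2 measure_ball_lt_top.ne
  calc _ ≤ (μ.restrict (ball a ρ)).real (closedBall a t ∆ closedBall b t) :=
        abs_measureReal_sub_le_measureReal_symmDiff measurableSet_closedBall.nullMeasurableSet
          measurableSet_closedBall.nullMeasurableSet
    _ = μ.real ((closedBall a t ∆ closedBall b t) ∩ ball a ρ) :=
        measureReal_restrict_apply (measurableSet_closedBall.symmDiff measurableSet_closedBall)
    _ ≤ _ := measureReal_mono
        (inter_subset_inter_left _ (closedBall_symmDiff_closedBall_subset ..))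
        (measure_ne_top_of_subset inter_subset_right measure_ball_lt_top.ne)

lemma abs_measureReal_restrict_ball_closedBall_sub_le_of_le (hRt : R ≤ t) (hRρ : R ≤ ρ) :
    |(μ.restrict (ball a ρ)).real (closedBall a t)
        - (μ.restrict (ball a ρ)).real (closedBall b t)|
      ≤ μ.real (closedBall a ρ) - μ.real (closedBall a (R - dist b a)) := by
  refine (abs_measureReal_restrict_ball_closedBall_sub_le μ).trans ?_
  have hd := dist_nonneg (x := b) (y := a)
  rw [← measureReal_sdiff (closedBall_subset_closedBall (by linarith)) measurableSet_closedBall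
    measure_closedBall_lt_top.ne]
  refine measureReal_mono ?_
    (measure_ne_top_of_subset Set.sdiff_subset measure_closedBall_lt_top.ne)
  rintro w ⟨⟨-, hw⟩, hwρ⟩
  simp only [mem_closedBall, not_le, mem_ball, Set.mem_sdiff] at hw hwρ ⊢
  constructor <;> linarith

lemma measureReal_restrict_ball_closedBall_sub_eq_zero (h : ρ + dist b a ≤ t) :
    (μ.restrict (ball a ρ)).real (closedBall a t)
      - (μ.restrict (ball a ρ)).real (closedBall b t) = 0 := by
  have hempty :
      (closedBall a (t + dist b a) \ closedBall a (t - dist b a)) ∩ ball a ρ = ∅ := by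
    refine eq_empty_of_forall_notMem ?_
    rintro w ⟨⟨-, hw⟩, hwρ⟩
    simp only [mem_closedBall, not_le, mem_ball] at hw hwρ
    linarith
  simpa [hempty] using
    abs_measureReal_restrict_ball_closedBall_sub_le μ (a := a) (b := b) (ρ := ρ) (t := t)

lemma norm_setIntegral_Ioi_restrict_ball_le (hR : 0 < R) (hRρ : R ≤ ρ) :
    ‖∫ t in Ioi R, ((μ.restrict (ball a ρ)).real (closedBall a t)
        - (μ.restrict (ball a ρ)).real (closedBall b t)) / t‖
      ≤ (ρ + dist b a - R) *
        ((μ.real (closedBall a ρ) - μ.real (closedBall a (R - dist b a))) / R) := by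
  have hd := dist_nonneg (x := b) (y := a)
  rw [setIntegral_eq_of_subset_of_forall_sdiff_eq_zero (s := Ioc R (ρ + dist b a))
    measurableSet_Ioi Ioc_subset_Ioi_self fun t ht => ?_]
  · refine (norm_setIntegral_le_of_norm_le_const measure_Ioc_lt_top fun t ht => ?_).trans_eq
      (by rw [Real.volume_real_Ioc_of_le (by linarith), mul_comm])
    have hshell :=
      abs_measureReal_restrict_ball_closedBall_sub_le_of_le μ (a := a) (b := b) ht.1.le hRρ
    rw [norm_div, Real.norm_eq_abs, Real.norm_of_nonneg (hR.trans ht.1).le]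
    exact div_le_div₀ ((abs_nonneg _).trans hshell) hshell hR ht.1.le
  · rw [measureReal_restrict_ball_closedBall_sub_eq_zero μ
      (not_le.1 fun h => ht.2 ⟨ht.1, h⟩).le, zero_div]

theorem norm_setIntegral_Ioc_sub_setIntegral_ball_le (hR : 1 ≤ R) :
    ‖(∫ t in Ioc 1 R, (μ.real (closedBall a t) - μ.real (closedBall b t)) / t)
        - ∫ w in ball a (R + dist b a + 1), (log⁺ (dist w b) - log⁺ (dist w a)) ∂μ‖
      ≤ (2 * dist b a + 1) * ((μ.real (closedBall a (R + dist b a + 1))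
          - μ.real (closedBall a (R - dist b a))) / R) := by
  set ρ := R + dist b a + 1
  have hd := dist_nonneg (x := b) (y := a)
  have : IsFiniteMeasure (μ.restrict (ball a ρ)) :=
    isFiniteMeasure_restrict.2 measure_ball_lt_top.ne
  have hint (c : X) : Integrable (fun w => log⁺ (dist w c)) (μ.restrict (ball a ρ)) :=
    integrable_posLog_dist isBounded_ball (ae_restrict_mem measurableSet_ball) c
  have hF := integrableOn_measureReal_closedBall_sub_div (hint a) (hint b)
  have hinner : ∫ t in Ioc 1 R, (μ.real (closedBall a t) - μ.real (closedBall b t)) / t =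
      ∫ t in Ioc 1 R, ((μ.restrict (ball a ρ)).real (closedBall a t)
        - (μ.restrict (ball a ρ)).real (closedBall b t)) / t := by
    refine setIntegral_congr_fun measurableSet_Ioc fun t ht => ?_
    rw [measureReal_restrict_ball_closedBall μ (by rw [dist_self]; linarith [ht.2]),
      measureReal_restrict_ball_closedBall μ (by linarith [ht.2])]
  rw [integral_posLog_dist_sub_posLog_dist (hint a) (hint b), ← Ioc_union_Ioi_eq_Ioi hR,
    setIntegral_union Ioc_disjoint_Ioi_same measurableSet_Ioi (hF.mono_set Ioc_subset_Ioi_self)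
      (hF.mono_set (Ioi_subset_Ioi hR)), hinner, sub_add_cancel_left, norm_neg]
  exact (norm_setIntegral_Ioi_restrict_ball_le μ (by linarith) (by linarith)).trans_eq
    (by ring)

end Truncation

theorem Monotone.isLittleO_sub_of_isLittleO_sub_one {f : ℝ → ℝ} (hf : Monotone f)
    (h : (fun R => f (R + 1) - f R) =o[atTop] fun R => R) (a b : ℝ) :
    (fun R => f (R + b) - f (R + a)) =o[atTop] fun R => R := by
  have hshift (c : ℝ) : (fun R => f (R + c + 1) - f (R + c)) =o[atTop] fun R => R :=
    (h.comp_tendsto (tendsto_atTop_add_const_right _ c tendsto_id)).trans_isBigO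
      ((isBigO_refl _ _).add (isLittleO_const_id_atTop c).isBigO)
  have hsteps (c : ℝ) (n : ℕ) : (fun R => f (R + c + n) - f (R + c)) =o[atTop] fun R => R := by
    induction n with
    | zero => simp
    | succ n ih =>
      refine ((hshift (c + n)).add ih).congr_left fun R => ?_
      simp only [Nat.cast_succ, ← add_assoc]
      ring
  have hle {a b : ℝ} (hab : a ≤ b) : (fun R => f (R + b) - f (R + a)) =o[atTop] fun R => R := by
    refine (IsBigO.of_bound' (.of_forall fun R => ?_)).trans_isLittleO (hsteps a ⌈b - a⌉₊)
    have hb : R + b ≤ R + a + ⌈b - a⌉₊ := by linarith [Nat.le_ceil (b - a)]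
    rw [Real.norm_of_nonneg (sub_nonneg.2 (hf (by linarith))),
      Real.norm_of_nonneg (sub_nonneg.2 (hf (by linarith)))]
    linarith [hf hb]
  rcases le_total a b with hab | hba
  · exact hle hab
  · simpa using (hle hba).neg_left

/-- If `μ` is finite on compacts, `μ(B(0,R+1)) - μ(B(0,R)) = o(R)`, and the limit
`L = lim_{R→∞} ∫_{|w|<R} (log⁺|z-w| - log⁺|w|) dμ(w)` exists, then
`L = ∫₁^∞ (μ(B(0,t)) - μ(B(z,t)))/t dt` (as an improper integral). -/
theorem stmt7 (μ : Measure ℂ) [IsFiniteMeasureOnCompacts μ] (z : ℂ) (L : ℝ)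
    (ho : (fun R : ℝ => (μ (Metric.closedBall 0 (R + 1))).toReal
        - (μ (Metric.closedBall 0 R)).toReal) =o[atTop] (fun R : ℝ => R))
    (hlim : Tendsto (fun R : ℝ => ∫ w in {w : ℂ | ‖w‖ < R},
        (max (Real.log ‖z - w‖) 0 - max (Real.log ‖w‖) 0) ∂μ)
      atTop (nhds L)) :
    Tendsto (fun R : ℝ => ∫ t in Set.Ioc (1:ℝ) R,
        ((μ (Metric.closedBall 0 t)).toReal - (μ (Metric.closedBall z t)).toReal) / t)
      atTop (nhds L) := by
  have hL : Tendsto (fun R => ∫ w in ball (0 : ℂ) (R + dist z 0 + 1),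
      (log⁺ (dist w z) - log⁺ (dist w 0)) ∂μ) atTop (nhds L) := by
    refine (hlim.comp (tendsto_atTop_add_const_right _ (dist z 0 + 1) tendsto_id)).congr
      fun R => ?_
    simp [posLog, max_comm, dist_eq_norm, norm_sub_rev, ball, add_assoc]
  have hmono : Monotone fun s => μ.real (closedBall (0 : ℂ) s) := fun s t hst =>
    measureReal_mono (closedBall_subset_closedBall hst) measure_closedBall_lt_top.ne
  have hshell : Tendsto (fun R => (2 * dist z 0 + 1) *
      ((μ.real (closedBall 0 (R + dist z 0 + 1)) - μ.real (closedBall 0 (R - dist z 0))) / R))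
      atTop (nhds 0) := by
    simpa [sub_eq_add_neg, add_assoc] using
      ((hmono.isLittleO_sub_of_isLittleO_sub_one ho (-dist z 0) (dist z 0 + 1)
        ).tendsto_div_nhds_zero.const_mul (2 * dist z 0 + 1))
  have hdiff := squeeze_zero_norm' ((eventually_ge_atTop 1).mono fun R hR =>
    norm_setIntegral_Ioc_sub_setIntegral_ball_le μ (a := 0) (b := z) hR) hshell
  have hsum := hdiff.add hL
  simp only [sub_add_cancel, zero_add] at hsum
  exact hsum
end

section
/- Let μ be a nonnegative Borel measure on ℂ finite on compacts, and let z ∈ ℂ with |z| ≥ 1. For R > |z| + 1: ∫_{|w|<R} log⁺|z−w| dμ(w) − ∫_{|w|<R} log⁺|w| dμ(w) = ∫₁^R (μ(B(0,t)) − μ(B(z,t)))/t dt + ∫_{|w|<R, |w−z|≥R} log(|z−w|/R) dμ(w) − ∫_{|w|≥R, |w−z|<R} log(|z−w|/R) dμ(w). -/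
/-!
For `0 ≤ a` and `1 ≤ R`,
`log⁺ a = log R - ∫₁^R 1_{a ≤ t} dt/t + 1_{a ≥ R} log (a/R)`.
Integrating this over `{‖w‖ < R}` with `a = ‖z - w‖` and `a = ‖w‖` and exchanging the order of
integration turns the middle terms into `∫₁^R μ({‖w‖ < R} ∩ {a ≤ t}) dt/t`. For `t < R` the
set `{‖w‖ < R, ‖w‖ ≤ t}` is the ball `B(0,t)`, while `{‖w‖ < R} ∩ B(z,t)` is `B(z,t)` minus its
part outside the disc; the layer-cake integral of that outside part, over
`{‖w‖ ≥ R, ‖w - z‖ < R}` where `1 < ‖w - z‖`, is the last boundary term.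
-/

open Real Set MeasureTheory Metric
open scoped ENNReal

lemma integral_Ioc_one_indicator_Ici_inv {a R : ℝ} (hR : 1 ≤ R) :
    ∫ t in Ioc 1 R, (Ici a).indicator (fun t => t⁻¹) t = log R - log (max 1 (min a R)) := by
  rw [setIntegral_indicator measurableSet_Ici,
    setIntegral_congr_set ((ae_eq_refl _).inter Ioi_ae_eq_Ici.symm), Ioc_inter_Ioi]
  rcases le_or_gt a R with haR | hRa
  · rw [min_eq_left haR, ← intervalIntegral.integral_of_le (max_le hR haR),
      integral_inv_of_pos (by positivity) (by linarith),
      log_div (by positivity) (by positivity)]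
  · rw [Ioc_eq_empty (not_lt.2 (le_max_of_le_right hRa.le)), min_eq_right hRa.le,
      max_eq_right hR]
    simp

lemma log_max_one_min_nonneg_le {a R : ℝ} (hR : 1 ≤ R) :
    0 ≤ log (max 1 (min a R)) ∧ log (max 1 (min a R)) ≤ log R :=
  ⟨log_nonneg (le_max_left _ _), log_le_log (by positivity) (max_le hR (min_le_right _ _))⟩

lemma posLog_eq_log_max_one_min_add_indicator {a R : ℝ} (ha : 0 ≤ a) (hR : 1 ≤ R) :
    log⁺ a = log (max 1 (min a R)) + (Ici R).indicator (fun a => log (a / R)) a := by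
  rw [posLog_eq_log_max_one ha]
  rcases le_or_gt R a with hRa | haR
  · rw [min_eq_right hRa, max_eq_right hR, max_eq_right (hR.trans hRa),
      indicator_of_mem (mem_Ici.2 hRa),
      log_div (zero_lt_one.trans_le (hR.trans hRa)).ne' (by positivity)]
    ring
  · rw [min_eq_left haR.le, indicator_of_notMem (notMem_Ici.2 haR), add_zero]

section LayerCake

variable {α : Type*} [MeasurableSpace α] {μ : Measure α} {T : Set α} {c : α → ℝ} {R : ℝ}

lemma integrable_indicator_le_inv (hTfin : μ T ≠ ∞) (hc : Measurable c) :
    Integrable ({p : α × ℝ | c p.1 ≤ p.2}.indicator fun p => p.2⁻¹)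
      ((μ.restrict T).prod (volume.restrict (Ioc 1 R))) := by
  have : IsFiniteMeasure (μ.restrict T) := isFiniteMeasure_restrict.2 hTfin
  rw [← Measure.restrict_univ (μ := μ.restrict T), Measure.prod_restrict]
  refine Measure.integrableOn_of_bounded (M := 1) ?_ ?_ ?_
  · rw [Measure.prod_prod]
    exact ENNReal.mul_ne_top (measure_ne_top _ _) measure_Ioc_lt_top.ne
  · exact ((measurable_snd.inv).indicator
      (measurableSet_le (hc.comp measurable_fst) measurable_snd)).aestronglyMeasurable
  · refine ae_restrict_of_forall_mem (MeasurableSet.univ.prod measurableSet_Ioc) fun p hp => ?_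
    have ht : 1 ≤ p.2 := hp.2.1.le
    unfold indicator
    split_ifs
    · rw [norm_inv, Real.norm_of_nonneg (by linarith)]
      exact inv_le_one_of_one_le₀ ht
    · simp

lemma setIntegral_indicator_le_inv (hc : Measurable c) (t : ℝ) :
    ∫ w in T, {p : α × ℝ | c p.1 ≤ p.2}.indicator (fun p => p.2⁻¹) (w, t) ∂μ =
      μ.real (T ∩ {w | c w ≤ t}) / t := by
  change ∫ w in T, {w | c w ≤ t}.indicator (fun _ => t⁻¹) w ∂μ = _
  rw [setIntegral_indicator (measurableSet_le hc measurable_const), setIntegral_const,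
    smul_eq_mul, div_eq_mul_inv]

lemma integrableOn_Ioc_measureReal_le_div (hTfin : μ T ≠ ∞) (hc : Measurable c) :
    IntegrableOn (fun t => μ.real (T ∩ {w | c w ≤ t}) / t) (Ioc 1 R) := by
  have : IsFiniteMeasure (μ.restrict T) := isFiniteMeasure_restrict.2 hTfin
  exact ((integrable_indicator_le_inv hTfin hc).integral_prod_right).congr
    (.of_forall (setIntegral_indicator_le_inv hc))

lemma integral_Ioc_measureReal_le_div (hTfin : μ T ≠ ∞) (hc : Measurable c) (hR : 1 ≤ R) :
    ∫ t in Ioc 1 R, μ.real (T ∩ {w | c w ≤ t}) / t =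
      ∫ w in T, (log R - log (max 1 (min (c w) R))) ∂μ := by
  have : IsFiniteMeasure (μ.restrict T) := isFiniteMeasure_restrict.2 hTfin
  simp_rw [← setIntegral_indicator_le_inv hc, ← integral_Ioc_one_indicator_Ici_inv hR]
  exact (integral_integral_swap (f := fun w t =>
    {p : α × ℝ | c p.1 ≤ p.2}.indicator (fun p => p.2⁻¹) (w, t))
    (integrable_indicator_le_inv hTfin hc)).symm

lemma integrableOn_log_max_one_min (hTfin : μ T ≠ ∞) (hc : Measurable c) (hR : 1 ≤ R) :
    IntegrableOn (fun w => log (max 1 (min (c w) R))) T μ := by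
  refine Measure.integrableOn_of_bounded (M := log R) hTfin
    (measurable_log.comp (measurable_const.max (hc.min measurable_const))).aestronglyMeasurable
    (ae_of_all _ fun w => ?_)
  obtain ⟨h0, hle⟩ := log_max_one_min_nonneg_le (a := c w) hR
  rwa [norm_of_nonneg h0]

lemma setIntegral_posLog_eq (hT : MeasurableSet T) (hTfin : μ T ≠ ∞) (hc : Measurable c)
    (hc0 : ∀ w ∈ T, 0 ≤ c w) (hlog : IntegrableOn (fun w => log⁺ (c w)) T μ) (hR : 1 ≤ R) :
    ∫ w in T, log⁺ (c w) ∂μ =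
      μ.real T * log R - (∫ t in Ioc 1 R, μ.real (T ∩ {w | c w ≤ t}) / t)
        + ∫ w in T ∩ {w | R ≤ c w}, log (c w / R) ∂μ := by
  have hclamp := integrableOn_log_max_one_min hTfin hc hR
  have htail : ∫ w in T ∩ {w | R ≤ c w}, log (c w / R) ∂μ =
      ∫ w in T, log⁺ (c w) ∂μ - ∫ w in T, log (max 1 (min (c w) R)) ∂μ := by
    rw [← integral_sub hlog hclamp,
      ← setIntegral_indicator (measurableSet_le measurable_const hc)]
    refine setIntegral_congr_fun hT fun w hw => ?_
    rw [posLog_eq_log_max_one_min_add_indicator (hc0 w hw) hR, add_sub_cancel_left]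
    rfl
  rw [integral_Ioc_measureReal_le_div hTfin hc hR,
    integral_sub (integrableOn_const (C := log R) hTfin) hclamp, setIntegral_const, htail,
    smul_eq_mul]
  ring

lemma integral_Ioc_measureReal_le_div_of_mem_Icc (hT : MeasurableSet T) (hTfin : μ T ≠ ∞)
    (hc : Measurable c) (hR : 1 ≤ R) (hcT : ∀ w ∈ T, c w ∈ Icc 1 R) :
    ∫ t in Ioc 1 R, μ.real (T ∩ {w | c w ≤ t}) / t = -∫ w in T, log (c w / R) ∂μ := by
  rw [integral_Ioc_measureReal_le_div hTfin hc hR, ← integral_neg]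
  refine setIntegral_congr_fun hT fun w hw => ?_
  obtain ⟨h1, hR'⟩ := hcT w hw
  rw [min_eq_left hR', max_eq_right h1, log_div (by positivity) (by positivity)]
  ring

end LayerCake

section NormedGroup

variable {E : Type*} [NormedAddCommGroup E] [ProperSpace E] [MeasurableSpace E]
  {μ : Measure E} [IsFiniteMeasureOnCompacts μ]

lemma measure_norm_lt_ne_top (R : ℝ) : μ {w | ‖w‖ < R} ≠ ∞ := by
  rw [← ball_zero_eq]
  exact measure_ball_lt_top.ne

lemma measure_setOf_and_norm_sub_lt_ne_top (p : E → Prop) (z : E) (R : ℝ) :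
    μ {w | p w ∧ ‖w - z‖ < R} ≠ ∞ :=
  measure_ne_top_of_subset (fun _ hw => mem_ball_iff_norm.2 hw.2) measure_ball_lt_top.ne

variable [OpensMeasurableSpace E]

/-- For `t < R` the ball `B(z,t)` splits into its parts inside and outside `{‖w‖ < R}`;
the endpoint `t = R` is a null set. -/
lemma integral_Ioc_measureReal_closedBall_sub (z : E) (R : ℝ) :
    ∫ t in Ioc 1 R, (μ.real (closedBall 0 t) - μ.real (closedBall z t)) / t =
      (∫ t in Ioc 1 R, μ.real ({w | ‖w‖ < R} ∩ {w | ‖w‖ ≤ t}) / t)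
      - (∫ t in Ioc 1 R, μ.real ({w | ‖w‖ < R} ∩ {w | ‖z - w‖ ≤ t}) / t)
      - ∫ t in Ioc 1 R, μ.real ({w | R ≤ ‖w‖ ∧ ‖w - z‖ < R} ∩ {w | ‖z - w‖ ≤ t}) / t := by
  set S := {w : E | ‖w‖ < R}
  set S' := {w : E | R ≤ ‖w‖ ∧ ‖w - z‖ < R}
  have hS : MeasurableSet S := measurableSet_lt measurable_norm measurable_const
  have hSfin : μ S ≠ ∞ := measure_norm_lt_ne_top R
  have hS'fin : μ S' ≠ ∞ := measure_setOf_and_norm_sub_lt_ne_top _ z R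
  have hnz : Measurable fun w : E => ‖z - w‖ := (by fun_prop : Continuous _).measurable
  have hiS := integrableOn_Ioc_measureReal_le_div (R := R) hSfin measurable_norm
  have hiSz := integrableOn_Ioc_measureReal_le_div (R := R) hSfin hnz
  have hiS' := integrableOn_Ioc_measureReal_le_div (R := R) hS'fin hnz
  rw [← integral_sub hiS hiSz, ← integral_sub (hiS.sub' hiSz) hiS',
    integral_Ioc_eq_integral_Ioo, integral_Ioc_eq_integral_Ioo]
  refine setIntegral_congr_fun measurableSet_Ioo fun t ht => ?_
  have h0 : S ∩ {w | ‖w‖ ≤ t} = closedBall 0 t := by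
    ext w
    simp only [S, mem_inter_iff, mem_ofPred_eq, mem_closedBall_zero_iff]
    exact ⟨And.right, fun hw => ⟨hw.trans_lt ht.2, hw⟩⟩
  have hin : closedBall z t ∩ S = S ∩ {w | ‖z - w‖ ≤ t} := by
    ext w
    simp only [S, mem_inter_iff, mem_ofPred_eq, mem_closedBall_iff_norm', and_comm]
  have hout : closedBall z t \ S = S' ∩ {w | ‖z - w‖ ≤ t} := by
    ext w
    simp only [S, S', mem_sdiff, mem_inter_iff, mem_ofPred_eq, mem_closedBall_iff_norm', not_lt,
      norm_sub_rev w z]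
    exact ⟨fun h => ⟨⟨h.2, h.1.trans_lt ht.2⟩, h.1⟩, fun h => ⟨h.2, h.1.1⟩⟩
  rw [h0, ← measureReal_inter_add_sdiff hS (s := closedBall z t) measure_closedBall_lt_top.ne,
    hin, hout]
  ring

end NormedGroup

theorem stmt8_general (μ : Measure ℂ) [IsFiniteMeasureOnCompacts μ] (z : ℂ)
    (R : ℝ) (hR : ‖z‖ + 1 < R) :
    (∫ w in {w : ℂ | ‖w‖ < R}, max (Real.log (‖z - w‖)) 0 ∂μ)
      - ∫ w in {w : ℂ | ‖w‖ < R}, max (Real.log (‖w‖)) 0 ∂μ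
    = (∫ t in Set.Ioc (1:ℝ) R,
        ((μ (Metric.closedBall 0 t)).toReal - (μ (Metric.closedBall z t)).toReal) / t)
      + (∫ w in {w : ℂ | ‖w‖ < R ∧ R ≤ ‖w - z‖},
          Real.log (‖z - w‖ / R) ∂μ)
      - ∫ w in {w : ℂ | R ≤ ‖w‖ ∧ ‖w - z‖ < R},
          Real.log (‖z - w‖ / R) ∂μ := by
  have hR1 : 1 ≤ R := by linarith [norm_nonneg z]
  set S := {w : ℂ | ‖w‖ < R}
  have hS : MeasurableSet S := measurableSet_lt measurable_norm measurable_const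
  have hlog (f : ℂ → ℂ) (hf : Continuous f) : IntegrableOn (fun w => log⁺ ‖f w‖) S μ :=
    ((continuous_posLog.comp hf.norm).locallyIntegrable.integrableOn_isCompact
      (isCompact_closedBall 0 R)).mono_set fun w hw => mem_closedBall_zero_iff.2 hw.le
  have hnz : Measurable fun w : ℂ => ‖z - w‖ := (by fun_prop : Continuous _).measurable
  have hlog0 := setIntegral_posLog_eq hS (measure_norm_lt_ne_top R) measurable_norm
    (fun w _ => norm_nonneg w) (hlog id continuous_id) hR1
  have hlogz := setIntegral_posLog_eq hS (measure_norm_lt_ne_top R) hnz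
    (fun w _ => norm_nonneg _) (hlog _ (by fun_prop)) hR1
  have hS' : MeasurableSet {w : ℂ | R ≤ ‖w‖ ∧ ‖w - z‖ < R} :=
    (measurableSet_le measurable_const measurable_norm).inter
      (measurableSet_lt (by fun_prop : Continuous fun w : ℂ => ‖w - z‖).measurable
        measurable_const)
  have hboundary := integral_Ioc_measureReal_le_div_of_mem_Icc (μ := μ) hS'
    (measure_setOf_and_norm_sub_lt_ne_top _ z R) hnz hR1 fun w hw =>
      ⟨by linarith [norm_sub_norm_le w z, norm_sub_rev z w, hw.1],
        (norm_sub_rev z w ▸ hw.2).le⟩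
  have hempty : S ∩ {w | R ≤ ‖w‖} = ∅ := by
    ext w
    simp [S]
  have htail : {w : ℂ | ‖w‖ < R ∧ R ≤ ‖w - z‖} = S ∩ {w | R ≤ ‖z - w‖} := by
    ext w
    simp only [S, mem_inter_iff, mem_ofPred_eq, norm_sub_rev w z]
  rw [hempty, Measure.restrict_empty, integral_zero_measure] at hlog0
  simp only [← measureReal_def, integral_Ioc_measureReal_closedBall_sub, htail, hboundary,
    max_comm _ (0 : ℝ), ← posLog_apply]
  linarith

/-- The exact decomposition of `∫_{|w|<R} (log⁺|z-w| - log⁺|w|) dμ(w)` into the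
main term `∫₁^R (μ(B(0,t)) - μ(B(z,t)))/t dt` and two boundary integrals. -/
theorem stmt8 (μ : Measure ℂ) [IsFiniteMeasureOnCompacts μ] (z : ℂ)
    (hz : 1 ≤ ‖z‖) (R : ℝ) (hR : ‖z‖ + 1 < R) :
    (∫ w in {w : ℂ | ‖w‖ < R}, max (Real.log (‖z - w‖)) 0 ∂μ)
      - ∫ w in {w : ℂ | ‖w‖ < R}, max (Real.log (‖w‖)) 0 ∂μ
    = (∫ t in Set.Ioc (1:ℝ) R,
        ((μ (Metric.closedBall 0 t)).toReal - (μ (Metric.closedBall z t)).toReal) / t)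
      + (∫ w in {w : ℂ | ‖w‖ < R ∧ R ≤ ‖w - z‖},
          Real.log (‖z - w‖ / R) ∂μ)
      - ∫ w in {w : ℂ | R ≤ ‖w‖ ∧ ‖w - z‖ < R},
          Real.log (‖z - w‖ / R) ∂μ :=
  stmt8_general μ z R hR
end

section
/- Let μ be a nonnegative Borel measure on ℂ invariant under translation by 1 with μ({z : 0 ≤ Re z < 1}) < ∞. Then μ(B(0, r+1)) − μ(B(0, r)) = o(r) as r → ∞, where B(0,r) is the closed disc of radius r. -/
/-!
Translation invariance lets one cover `{a ≤ re z ≤ b, im z ∈ T}` by at most `b - a + 2` integer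
translates of `S_T = {0 ≤ re z < 1, im z ∈ T}`. Since `|z| ≤ |re z| + |im z|`, the annulus
`r < |z| ≤ r + 1` lies in `{|re z| ≤ r + 1, |im z| > h} ∪ {r - h < |re z| ≤ r + 1}`, so its
measure is at most `(2r + 4) μ(S_{|t| > h}) + 2(h + 3) μ(S_ℝ)`. As `μ(S_ℝ) < ∞`,
`μ(S_{|t| > h}) → 0` when `h → ∞`, and the choice `h = log r` makes both terms `o(r)`.
-/

open Real Filter MeasureTheory Asymptotics
open Set
open scoped ENNReal Topology

lemma MeasurableSet.reProdIm {s t : Set ℝ} (hs : MeasurableSet s) (ht : MeasurableSet t) :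
    MeasurableSet (s ×ℂ t) :=
  (Complex.measurable_re hs).inter (Complex.measurable_im ht)

namespace MeasureTheory.Measure

variable {G : Type*} [AddGroup G] [MeasurableSpace G] [MeasurableAdd G]

def addPeriods (μ : Measure G) : AddSubgroup G where
  carrier := {g | μ.map (· + g) = μ}
  zero_mem' := by simp
  add_mem' {g h} hg hh := by
    change μ.map (· + (g + h)) = μ
    have hcomp : (· + (g + h)) = (· + h) ∘ (· + g) := by funext x; simp [add_assoc]
    rw [hcomp, ← map_map (measurable_add_const h) (measurable_add_const g), hg, hh]
  neg_mem' {g} hg := by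
    change μ.map (· + -g) = μ
    conv_lhs => rw [← hg]
    rw [map_map (measurable_add_const _) (measurable_add_const _)]
    simp [Function.comp_def]

end MeasureTheory.Measure

section

variable {μ : Measure ℂ}

lemma measure_preimage_add_intCast (hμ : μ.map (· + 1) = μ) (n : ℤ) {E : Set ℂ}
    (hE : MeasurableSet E) : μ ((· + (n : ℂ)) ⁻¹' E) = μ E := by
  have hn : (n : ℂ) ∈ μ.addPeriods := by simpa using μ.addPeriods.zsmul_mem hμ n
  rw [← Measure.map_apply (measurable_add_const _) hE, hn]

lemma measure_Ico_intCast_reProdIm (hμ : μ.map (· + 1) = μ) (k : ℤ) {T : Set ℝ}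
    (hT : MeasurableSet T) : μ (Ico (k : ℝ) (k + 1) ×ℂ T) = μ (Ico 0 1 ×ℂ T) := by
  have htrans : Ico (k : ℝ) (k + 1) ×ℂ T = (· + ((-k : ℤ) : ℂ)) ⁻¹' (Ico 0 1 ×ℂ T) := by
    ext z
    simp only [Complex.mem_reProdIm, mem_preimage, mem_Ico, Complex.add_re, Complex.add_im,
      Int.cast_neg, Complex.neg_re, Complex.neg_im, Complex.intCast_re, Complex.intCast_im,
      neg_zero, add_zero]
    constructor <;> rintro ⟨⟨h₁, h₂⟩, hz⟩ <;> exact ⟨⟨by linarith, by linarith⟩, hz⟩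
  rw [htrans, measure_preimage_add_intCast hμ _ (measurableSet_Ico.reProdIm hT)]

lemma Icc_reProdIm_subset_biUnion (a b : ℝ) (T : Set ℝ) :
    Icc a b ×ℂ T ⊆ ⋃ k ∈ Finset.Icc ⌊a⌋ ⌊b⌋, Ico (k : ℝ) (k + 1) ×ℂ T := by
  rintro z ⟨⟨ha, hb⟩, hz⟩
  refine mem_biUnion (x := ⌊z.re⌋) ?_ ⟨⟨Int.floor_le _, Int.lt_floor_add_one _⟩, hz⟩
  exact Finset.mem_Icc.2 ⟨Int.floor_mono ha, Int.floor_mono hb⟩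

lemma card_Icc_floor_le_ofReal (a b : ℝ) :
    ((Finset.Icc ⌊a⌋ ⌊b⌋).card : ℝ≥0∞) ≤ ENNReal.ofReal (b - a + 2) := by
  rw [Int.card_Icc, ← ENNReal.ofReal_natCast, ENNReal.ofReal_le_ofReal_iff']
  rcases le_or_gt 0 (⌊b⌋ + 1 - ⌊a⌋) with h | h
  · left
    rw [← Int.cast_natCast, Int.toNat_of_nonneg h]
    push_cast
    linarith [Int.floor_le b, Int.sub_one_lt_floor a]
  · right
    simp [Int.toNat_of_nonpos h.le]

lemma measure_Icc_reProdIm_le (hμ : μ.map (· + 1) = μ) {T : Set ℝ} (hT : MeasurableSet T)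
    (a b : ℝ) : μ (Icc a b ×ℂ T) ≤ ENNReal.ofReal (b - a + 2) * μ (Ico 0 1 ×ℂ T) :=
  calc μ (Icc a b ×ℂ T)
      ≤ ∑ k ∈ Finset.Icc ⌊a⌋ ⌊b⌋, μ (Ico (k : ℝ) (k + 1) ×ℂ T) :=
        (measure_mono (Icc_reProdIm_subset_biUnion a b T)).trans (measure_biUnion_finset_le _ _)
    _ = (Finset.Icc ⌊a⌋ ⌊b⌋).card * μ (Ico 0 1 ×ℂ T) := by
        simp [measure_Ico_intCast_reProdIm hμ _ hT]
    _ ≤ ENNReal.ofReal (b - a + 2) * μ (Ico 0 1 ×ℂ T) := by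
        gcongr; exact card_Icc_floor_le_ofReal a b

lemma measure_closedBall_ne_top (hμ : μ.map (· + 1) = μ) (hfin : μ (Ico 0 1 ×ℂ univ) ≠ ∞)
    (r : ℝ) : μ (Metric.closedBall 0 r) ≠ ∞ := by
  refine ne_top_of_le_ne_top (ENNReal.mul_ne_top ENNReal.ofReal_ne_top hfin)
    ((measure_mono ?_).trans (measure_Icc_reProdIm_le hμ MeasurableSet.univ (-r) r))
  intro z hz
  exact ⟨abs_le.1 ((Complex.abs_re_le_norm z).trans (mem_closedBall_zero_iff.1 hz)), mem_univ _⟩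

lemma closedBall_sdiff_closedBall_subset (r h : ℝ) :
    Metric.closedBall (0 : ℂ) (r + 1) \ Metric.closedBall 0 r ⊆
      Icc (-(r + 1)) (r + 1) ×ℂ {t | h < |t|} ∪ Icc (r - h) (r + 1) ×ℂ univ
        ∪ Icc (-(r + 1)) (h - r) ×ℂ univ := by
  rintro z ⟨hz₁, hz₂⟩
  rw [mem_closedBall_zero_iff] at hz₁
  rw [mem_closedBall_zero_iff, not_le] at hz₂
  obtain ⟨hre₁, hre₂⟩ := abs_le.1 ((Complex.abs_re_le_norm z).trans hz₁)
  by_cases him : h < |z.im|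
  · exact Or.inl (Or.inl ⟨⟨hre₁, hre₂⟩, him⟩)
  have hre : r - h < |z.re| := by linarith [Complex.norm_le_abs_re_add_abs_im z, not_lt.1 him]
  rcases lt_abs.1 hre with hpos | hneg
  · exact Or.inl (Or.inr ⟨⟨hpos.le, hre₂⟩, mem_univ _⟩)
  · exact Or.inr ⟨⟨hre₁, by linarith⟩, mem_univ _⟩

lemma measure_closedBall_sdiff_closedBall_le (hμ : μ.map (· + 1) = μ) (r h : ℝ) :
    μ (Metric.closedBall 0 (r + 1) \ Metric.closedBall 0 r) ≤
      ENNReal.ofReal (2 * r + 4) * μ (Ico 0 1 ×ℂ {t | h < |t|})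
        + 2 * ENNReal.ofReal (h + 3) * μ (Ico 0 1 ×ℂ univ) := by
  have hT : MeasurableSet {t : ℝ | h < |t|} := measurableSet_lt measurable_const measurable_abs
  calc μ (Metric.closedBall 0 (r + 1) \ Metric.closedBall 0 r)
      ≤ μ (Icc (-(r + 1)) (r + 1) ×ℂ {t | h < |t|}) + μ (Icc (r - h) (r + 1) ×ℂ univ)
          + μ (Icc (-(r + 1)) (h - r) ×ℂ univ) :=
        (measure_mono (closedBall_sdiff_closedBall_subset r h)).trans <|
          (measure_union_le _ _).trans (add_le_add_left (measure_union_le _ _) _)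
    _ ≤ ENNReal.ofReal (r + 1 - -(r + 1) + 2) * μ (Ico 0 1 ×ℂ {t | h < |t|})
          + ENNReal.ofReal (r + 1 - (r - h) + 2) * μ (Ico 0 1 ×ℂ univ)
          + ENNReal.ofReal (h - r - -(r + 1) + 2) * μ (Ico 0 1 ×ℂ univ) :=
        add_le_add (add_le_add (measure_Icc_reProdIm_le hμ hT _ _)
          (measure_Icc_reProdIm_le hμ .univ _ _)) (measure_Icc_reProdIm_le hμ .univ _ _)
    _ = _ := by
        rw [show r + 1 - -(r + 1) + 2 = 2 * r + 4 by ring, show r + 1 - (r - h) + 2 = h + 3 by ring,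
          show h - r - -(r + 1) + 2 = h + 3 by ring]
        ring

lemma measureReal_closedBall_sdiff_closedBall_le (hμ : μ.map (· + 1) = μ)
    (hfin : μ (Ico 0 1 ×ℂ univ) ≠ ∞) {r h : ℝ} (hr : 0 ≤ r) (hh : 0 ≤ h) :
    μ.real (Metric.closedBall 0 (r + 1) \ Metric.closedBall 0 r) ≤
      (2 * r + 4) * μ.real (Ico 0 1 ×ℂ {t | h < |t|})
        + 2 * (h + 3) * μ.real (Ico 0 1 ×ℂ univ) := by
  have hg : μ (Ico 0 1 ×ℂ {t | h < |t|}) ≠ ∞ :=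
    ne_top_of_le_ne_top hfin (measure_mono fun z hz => ⟨hz.1, mem_univ _⟩)
  have := ENNReal.toReal_mono (by finiteness) (measure_closedBall_sdiff_closedBall_le hμ r h)
  rwa [ENNReal.toReal_add (by finiteness) (by finiteness), ENNReal.toReal_mul, ENNReal.toReal_mul,
    ENNReal.toReal_mul, ENNReal.toReal_ofReal (by linarith), ENNReal.toReal_ofReal (by linarith)]
    at this

lemma tendsto_measure_setOf_lt_atTop {α : Type*} [MeasurableSpace α] (ν : Measure α)
    [IsFiniteMeasure ν] {f : α → ℝ} (hf : Measurable f) :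
    Tendsto (fun c : ℝ => ν {x | c < f x}) atTop (𝓝 0) := by
  have hmeas (c : ℝ) : NullMeasurableSet {x | c < f x} ν :=
    (measurableSet_lt measurable_const hf).nullMeasurableSet
  have hanti : Antitone fun c : ℝ => {x | c < f x} := fun c c' hcc' x hx => hcc'.trans_lt hx
  have hempty : ⋂ c : ℝ, {x | c < f x} = ∅ :=
    eq_empty_of_forall_notMem fun x hx => lt_irrefl (f x) (mem_iInter.1 hx (f x))
  have := tendsto_measure_iInter_atTop hmeas hanti ⟨0, measure_ne_top ν _⟩
  rwa [hempty, measure_empty] at this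

lemma tendsto_measureReal_Ico_reProdIm_abs_gt (hfin : μ (Ico 0 1 ×ℂ univ) ≠ ∞) :
    Tendsto (fun c : ℝ => μ.real (Ico 0 1 ×ℂ {t | c < |t|})) atTop (𝓝 0) := by
  have : IsFiniteMeasure (μ.restrict (Ico 0 1 ×ℂ univ)) := isFiniteMeasure_restrict.2 hfin
  have hrestrict (c : ℝ) :
      μ.restrict (Ico 0 1 ×ℂ univ) {z | c < |z.im|} = μ (Ico 0 1 ×ℂ {t | c < |t|}) := by
    rw [Measure.restrict_apply (measurableSet_lt measurable_const Complex.measurable_im.abs)]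
    congr 1
    ext z
    simp [Complex.mem_reProdIm, and_comm]
  have := tendsto_measure_setOf_lt_atTop (μ.restrict (Ico 0 1 ×ℂ univ)) Complex.measurable_im.abs
  simp only [hrestrict] at this
  exact (ENNReal.tendsto_toReal ENNReal.zero_ne_top).comp this

lemma isLittleO_annulus_bound {g : ℝ → ℝ} (hg : Tendsto g atTop (𝓝 0)) (s : ℝ) :
    (fun r => (2 * r + 4) * g (log r) + 2 * (log r + 3) * s) =o[atTop] id := by
  have hlin : (fun r : ℝ => 2 * r + 4) =O[atTop] id :=
    ((isBigO_refl id _).const_mul_left 2).add (isLittleO_const_id_atTop 4).isBigO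
  have hg' : (fun r => g (log r)) =o[atTop] (fun _ => (1 : ℝ)) :=
    (isLittleO_one_iff ℝ).2 (hg.comp tendsto_log_atTop)
  have hlog : (fun r => 2 * (log r + 3) * s) =o[atTop] id :=
    ((isLittleO_log_id_atTop.add (isLittleO_const_id_atTop 3)).const_mul_left (2 * s)).congr_left
      fun r => by ring
  have hprod := hlin.mul_isLittleO hg'
  simp only [id, mul_one] at hprod
  exact hprod.add hlog

end

/-- For a measure `μ` on `ℂ` invariant under translation by `1` and finite on the
fundamental strip, `μ(B(0,r+1)) - μ(B(0,r)) = o(r)` as `r → ∞`. -/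
theorem stmt14 (μ : Measure ℂ) (hinv : Measure.map (fun z : ℂ => z + 1) μ = μ)
    (hfin : μ {z : ℂ | 0 ≤ z.re ∧ z.re < 1} ≠ ⊤) :
    (fun r : ℝ => (μ (Metric.closedBall 0 (r + 1))).toReal
        - (μ (Metric.closedBall 0 r)).toReal) =o[atTop] (fun r : ℝ => r) := by
  have hstrip : {z : ℂ | 0 ≤ z.re ∧ z.re < 1} = Ico 0 1 ×ℂ univ := by
    ext z; simp [Complex.mem_reProdIm]
  rw [hstrip] at hfin
  refine IsBigO.trans_isLittleO (IsBigO.of_bound' ?_) (isLittleO_annulus_bound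
    (tendsto_measureReal_Ico_reProdIm_abs_gt hfin) (μ.real (Ico 0 1 ×ℂ univ)))
  filter_upwards [eventually_ge_atTop 1] with r hr
  have hannulus : (μ (Metric.closedBall 0 (r + 1))).toReal - (μ (Metric.closedBall 0 r)).toReal
      = μ.real (Metric.closedBall 0 (r + 1) \ Metric.closedBall 0 r) :=
    (measureReal_sdiff (Metric.closedBall_subset_closedBall (by linarith))
      measurableSet_closedBall (measure_closedBall_ne_top hinv hfin _)).symm
  rw [hannulus, Real.norm_of_nonneg measureReal_nonneg]
  exact (measureReal_closedBall_sdiff_closedBall_le hinv hfin (by linarith)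
    (log_nonneg hr)).trans (le_abs_self _)
end

section
/- Let μ be a nonnegative Borel measure on ℂ invariant under translation by 1 with μ({z : 0 ≤ Re z < 1}) < ∞. Then the limit lim_{R→∞} ∫_{1 ≤ |w| < R} (1/w) dμ(w) exists (as a finite complex number). -/
/-!
Write `S = {z | 0 ≤ re z < 1}`. Invariance under `z ↦ z + 1` unfolds `μ` over the translates
`S + n`, so `∫_{r ≤ |w| < R} dμ(w)/w = ∫_S ∑ₙ 1_{r ≤ |z+n| < R} / (z + n) dμ(z)`. In the fibre
over `z = x + iy` pair `z + n` with `z - n - 1`. When both lie in the annulus they nearly cancel: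
`|1/(z+n) + 1/(z-n-1)| = |2z - 1| / |(z+n)(z-n-1)| ≲ (1 + |y|) / (n + |y| + r)²`, and these sum to
`O((1 + |y|) / (|y| + r))`. Both squared moduli of a pair lie in `[n² + y², (n+1)² + y²]`, so at
most one pair straddles each boundary circle, and it contributes at most `1/r`. The fibrewise bound
is uniformly bounded and tends to `0` as `r → ∞`; dominated convergence on the finite measure
`μ|_S` makes the integrals over `r ≤ |w| < R` small uniformly in `R`, which is the Cauchy
criterion.
-/

open Real Filter MeasureTheory
open Set Topology
open scoped ENNReal

namespace PeriodicMeasure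

def annulus (r R : ℝ) : Set ℂ := (‖·‖) ⁻¹' Ico r R

lemma mem_annulus {r R : ℝ} {w : ℂ} : w ∈ annulus r R ↔ r ≤ ‖w‖ ∧ ‖w‖ < R := Iff.rfl

lemma measurableSet_annulus (r R : ℝ) : MeasurableSet (annulus r R) :=
  measurable_norm measurableSet_Ico

lemma annulus_union_annulus {r s R : ℝ} (h₁ : r ≤ s) (h₂ : s ≤ R) :
    annulus r s ∪ annulus s R = annulus r R := by
  rw [annulus, annulus, ← preimage_union, Ico_union_Ico_eq_Ico h₁ h₂, annulus]

lemma disjoint_annulus (r s R : ℝ) : Disjoint (annulus r s) (annulus s R) :=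
  Ico_disjoint_Ico_same.preimage _

def strip (n : ℤ) : Set ℂ := (fun z : ℂ => ⌊z.re⌋) ⁻¹' {n}

lemma measurableSet_strip (n : ℤ) : MeasurableSet (strip n) :=
  Complex.measurable_re.floor (measurableSet_singleton n)

lemma strip_zero : strip 0 = {z : ℂ | 0 ≤ z.re ∧ z.re < 1} := by
  ext z; simp [strip, Int.floor_eq_zero_iff]

lemma preimage_add_intCast_strip (n : ℤ) : (· + (n : ℂ)) ⁻¹' strip n = strip 0 := by
  ext z; simp [strip]

lemma iUnion_strip : ⋃ n, strip n = univ := by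
  ext z; simp [strip]

lemma pairwise_disjoint_strip : Pairwise (Function.onFun Disjoint strip) :=
  fun _ _ h => pairwiseDisjoint_fiber _ univ trivial trivial h

section Translation

variable {μ : Measure ℂ} (hμ : MeasurePreserving (· + (1 : ℂ)) μ μ)
include hμ

lemma measurePreserving_add_intCast (n : ℤ) : MeasurePreserving (· + (n : ℂ)) μ μ := by
  have hnat (m : ℕ) : MeasurePreserving (· + (m : ℂ)) μ μ := by
    simpa [add_right_iterate] using hμ.iterate m
  obtain ⟨m, rfl | rfl⟩ := Int.eq_nat_or_neg n
  · simpa using hnat m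
  · simpa [sub_eq_add_neg] using (hnat m).symm (MeasurableEquiv.addRight (m : ℂ))

lemma measure_strip (n : ℤ) : μ (strip n) = μ (strip 0) := by
  rw [← preimage_add_intCast_strip n,
    (measurePreserving_add_intCast hμ n).measure_preimage (measurableSet_strip n).nullMeasurableSet]

lemma setIntegral_strip {E : Type*} [NormedAddCommGroup E] [NormedSpace ℝ E] (f : ℂ → E)
    (n : ℤ) : ∫ w in strip n, f w ∂μ = ∫ z in strip 0, f (z + n) ∂μ := by
  rw [← preimage_add_intCast_strip n, (measurePreserving_add_intCast hμ n).setIntegral_preimage_emb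
    (measurableEmbedding_addRight _) f]

lemma setLIntegral_strip (f : ℂ → ℝ≥0∞) (n : ℤ) :
    ∫⁻ w in strip n, f w ∂μ = ∫⁻ z in strip 0, f (z + n) ∂μ := by
  rw [← preimage_add_intCast_strip n,
    (measurePreserving_add_intCast hμ n).setLIntegral_comp_preimage_emb
    (measurableEmbedding_addRight _) f]

theorem integral_eq_setIntegral_strip_tsum {E : Type*} [NormedAddCommGroup E] [NormedSpace ℝ E]
    {f : ℂ → E} (hf : Integrable f μ) :
    ∫ w, f w ∂μ = ∫ z in strip 0, ∑' n : ℤ, f (z + n) ∂μ := by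
  rw [integral_tsum]
  · rw [← setIntegral_univ, ← iUnion_strip,
      integral_iUnion measurableSet_strip pairwise_disjoint_strip hf.integrableOn]
    exact tsum_congr (setIntegral_strip hμ f)
  · exact fun n => (hf.aestronglyMeasurable.comp_measurePreserving
      (measurePreserving_add_intCast hμ n)).restrict
  · rw [← tsum_congr (setLIntegral_strip hμ (‖f ·‖ₑ)), ← lintegral_iUnion measurableSet_strip
      pairwise_disjoint_strip, iUnion_strip, setLIntegral_univ]
    exact hf.2.ne

variable (hfin : μ (strip 0) ≠ ⊤)
include hfin

lemma measure_norm_lt_ne_top (R : ℝ) : μ {w : ℂ | ‖w‖ < R} ≠ ⊤ := by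
  have hsub : {w : ℂ | ‖w‖ < R} ⊆ ⋃ n ∈ Finset.Icc ⌊-R⌋ ⌊R⌋, strip n := by
    intro w hw
    have hre := abs_lt.1 ((Complex.abs_re_le_norm w).trans_lt hw)
    simp only [mem_iUnion, Finset.mem_Icc, strip, mem_preimage, mem_singleton_iff]
    exact ⟨_, ⟨Int.floor_mono hre.1.le, Int.floor_mono hre.2.le⟩, rfl⟩
  refine ne_top_of_le_ne_top ?_ ((measure_mono hsub).trans (measure_biUnion_finset_le _ _))
  simpa [measure_strip hμ] using ENNReal.mul_ne_top (ENNReal.natCast_ne_top _) hfin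

lemma integrableOn_inv_annulus {r : ℝ} (hr : 0 < r) (R : ℝ) :
    IntegrableOn (·⁻¹) (annulus r R) μ := by
  refine Measure.integrableOn_of_bounded (M := r⁻¹)
    (ne_top_of_le_ne_top (measure_norm_lt_ne_top hμ hfin R) (measure_mono fun w hw => hw.2))
    measurable_inv.aestronglyMeasurable ?_
  filter_upwards [ae_restrict_mem (measurableSet_annulus r R)] with w hw
  rw [norm_inv]
  exact inv_anti₀ hr hw.1

lemma setIntegral_inv_annulus_sub {r s R : ℝ} (h₀ : 0 < r) (h₁ : r ≤ s) (h₂ : s ≤ R) :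
    ∫ w in annulus r R, w⁻¹ ∂μ - ∫ w in annulus r s, w⁻¹ ∂μ = ∫ w in annulus s R, w⁻¹ ∂μ := by
  rw [← annulus_union_annulus h₁ h₂, setIntegral_union (disjoint_annulus r s R)
    (measurableSet_annulus s R) (integrableOn_inv_annulus hμ hfin h₀ s)
    (integrableOn_inv_annulus hμ hfin (h₀.trans_le h₁) R), add_sub_cancel_left]

end Translation

lemma sum_range_inv_add_sq_le {a : ℝ} (ha : 1 ≤ a) (N : ℕ) :
    ∑ n ∈ Finset.range N, (((n : ℝ) + a) ^ 2)⁻¹ ≤ 2 / a := by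
  have hterm (n : ℕ) : (((n : ℝ) + a) ^ 2)⁻¹ ≤ 2 / ((n : ℝ) + a) - 2 / ((n + 1 : ℕ) + a) := by
    have hm : 1 ≤ (n : ℝ) + a := by linarith [n.cast_nonneg (α := ℝ)]
    have key : 2 / ((n : ℝ) + a) - 2 / ((n + 1 : ℕ) + a)
        = 2 / (((n : ℝ) + a) * ((n : ℝ) + a + 1)) := by
      push_cast; field_simp; ring
    rw [key, inv_eq_one_div, div_le_div_iff₀ (by positivity) (by positivity)]
    nlinarith
  calc ∑ n ∈ Finset.range N, (((n : ℝ) + a) ^ 2)⁻¹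
      ≤ ∑ n ∈ Finset.range N, (2 / ((n : ℝ) + a) - 2 / ((n + 1 : ℕ) + a)) :=
        Finset.sum_le_sum fun n _ => hterm n
    _ = 2 / a - 2 / ((N : ℝ) + a) := by
        rw [Finset.sum_range_sub' (fun n : ℕ => 2 / ((n : ℝ) + a))]; simp
    _ ≤ 2 / a := sub_le_self _ (by positivity)

lemma summable_inv_add_sq {a : ℝ} (ha : 1 ≤ a) :
    Summable fun n : ℕ => (((n : ℝ) + a) ^ 2)⁻¹ :=
  summable_of_sum_range_le (fun _ => by positivity) (sum_range_inv_add_sq_le ha)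

lemma tsum_inv_add_sq_le {a : ℝ} (ha : 1 ≤ a) : ∑' n : ℕ, (((n : ℝ) + a) ^ 2)⁻¹ ≤ 2 / a :=
  Real.tsum_le_of_sum_range_le (fun _ => by positivity) (sum_range_inv_add_sq_le ha)

lemma _root_.Set.Subsingleton.summable_indicator_const {ι : Type*} {s : Set ι}
    (hs : s.Subsingleton) (c : ℝ) : Summable (s.indicator fun _ => c) :=
  summable_of_hasFiniteSupport (hs.finite.subset support_indicator_subset)

lemma _root_.Set.Subsingleton.tsum_indicator_const_le {ι : Type*} {s : Set ι}
    (hs : s.Subsingleton) {c : ℝ} (hc : 0 ≤ c) : ∑' i, s.indicator (fun _ => c) i ≤ c :=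
  hs.induction_on (p := fun s => ∑' i, s.indicator (fun _ => c) i ≤ c) (by simpa using hc)
    fun i => by
      rw [tsum_eq_single i fun j hj => indicator_of_notMem (s := {i}) hj _]; simp

/-- The pair `z + n`, `z - (n + 1)` (with `0 ≤ re z ≤ 1`, `y = im z`) has both squared moduli in
`[n² + y², (n + 1)² + y²]`, so it can have exactly one member inside the circle of radius `T`
only if `n ∈ straddleSet y T`. -/
def straddleSet (y T : ℝ) : Set ℕ :=
  {n | (n : ℝ) ^ 2 + y ^ 2 < T ^ 2 ∧ T ^ 2 ≤ ((n : ℝ) + 1) ^ 2 + y ^ 2}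

lemma straddleSet_subsingleton (y T : ℝ) : (straddleSet y T).Subsingleton := by
  have key : ∀ m n : ℕ, m < n → m ∈ straddleSet y T → n ∉ straddleSet y T := by
    intro m n hmn hm hn
    have : (m : ℝ) + 1 ≤ n := by exact_mod_cast hmn
    nlinarith [hm.2, hn.1, m.cast_nonneg (α := ℝ)]
  intro m hm n hn
  by_contra hne
  rcases lt_or_gt_of_ne hne with h | h
  exacts [key m n h hm hn, key n m h hn hm]

lemma sq_norm_mem_Icc {w : ℂ} {n : ℝ} (hn : 0 ≤ n) (h₀ : n ≤ |w.re|) (h₁ : |w.re| ≤ n + 1) :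
    ‖w‖ ^ 2 ∈ Icc (n ^ 2 + w.im ^ 2) ((n + 1) ^ 2 + w.im ^ 2) := by
  rw [Complex.sq_norm, Complex.normSq_apply]
  constructor <;> nlinarith [sq_abs w.re]

lemma norm_inv_add_inv_le {a b : ℂ} {r s : ℝ} (hr : 0 < r) (hs : 0 ≤ s) (ha : r ≤ ‖a‖)
    (hb : r ≤ ‖b‖) (hsa : s ≤ ‖a‖ ^ 2) (hsb : s ≤ ‖b‖ ^ 2) :
    ‖a⁻¹ + b⁻¹‖ ≤ 2 * ‖a + b‖ / (r ^ 2 + s) := by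
  have ha₀ : a ≠ 0 := norm_pos_iff.1 (hr.trans_le ha)
  have hb₀ : b ≠ 0 := norm_pos_iff.1 (hr.trans_le hb)
  have hr₂ : r ^ 2 ≤ ‖a‖ * ‖b‖ := by rw [sq]; exact mul_le_mul ha hb hr.le (norm_nonneg a)
  have hs₂ : s ≤ ‖a‖ * ‖b‖ :=
    (pow_le_pow_iff_left₀ hs (by positivity) two_ne_zero).1 (by rw [mul_pow]; nlinarith)
  rw [inv_add_inv ha₀ hb₀, norm_div, norm_mul, div_le_div_iff₀ (by positivity) (by positivity)]
  nlinarith [norm_nonneg (a + b)]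

lemma norm_inv_le_indicator_straddleSet {c d : ℂ} {y r R : ℝ} {n : ℕ} (hr : 0 < r)
    (hc : c ∈ annulus r R) (hd : d ∉ annulus r R)
    (hc' : ‖c‖ ^ 2 ∈ Icc ((n : ℝ) ^ 2 + y ^ 2) (((n : ℝ) + 1) ^ 2 + y ^ 2))
    (hd' : ‖d‖ ^ 2 ∈ Icc ((n : ℝ) ^ 2 + y ^ 2) (((n : ℝ) + 1) ^ 2 + y ^ 2)) :
    ‖c⁻¹‖ ≤ (straddleSet y r).indicator (fun _ => r⁻¹) n
      + (straddleSet y R).indicator (fun _ => r⁻¹) n := by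
  have hind (T : ℝ) : 0 ≤ (straddleSet y T).indicator (fun _ => r⁻¹) n :=
    indicator_nonneg (fun _ _ => by positivity) n
  have hcr : ‖c⁻¹‖ ≤ r⁻¹ := by rw [norm_inv]; exact inv_anti₀ hr hc.1
  rw [mem_annulus] at hc
  rcases not_and_or.1 hd with hd | hd <;> simp only [not_le, not_lt] at hd
  · have hn : n ∈ straddleSet y r :=
      ⟨hd'.1.trans_lt (by nlinarith [norm_nonneg d]), (by nlinarith : r ^ 2 ≤ ‖c‖ ^ 2).trans hc'.2⟩
    rw [indicator_of_mem hn]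
    linarith [hind R]
  · have hn : n ∈ straddleSet y R := ⟨hc'.1.trans_lt (by nlinarith [norm_nonneg c]),
      (by nlinarith [norm_nonneg c] : R ^ 2 ≤ ‖d‖ ^ 2).trans hd'.2⟩
    rw [indicator_of_mem hn (f := fun _ => r⁻¹)]
    linarith [hind r]

section Fibre

variable {z : ℂ} (hz₀ : 0 ≤ z.re) (hz₁ : z.re ≤ 1)
include hz₀ hz₁

lemma sq_norm_add_natCast_mem_Icc (n : ℕ) :
    ‖z + n‖ ^ 2 ∈ Icc ((n : ℝ) ^ 2 + z.im ^ 2) (((n : ℝ) + 1) ^ 2 + z.im ^ 2) := by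
  have h : |(z + n).re| = z.re + n := by simp [abs_of_nonneg (add_nonneg hz₀ n.cast_nonneg)]
  have him : (z + n).im = z.im := by simp
  exact him ▸ sq_norm_mem_Icc n.cast_nonneg (by linarith) (by linarith)

lemma sq_norm_sub_natCast_mem_Icc (n : ℕ) :
    ‖z - (n + 1)‖ ^ 2 ∈ Icc ((n : ℝ) ^ 2 + z.im ^ 2) (((n : ℝ) + 1) ^ 2 + z.im ^ 2) := by
  have h : |(z - (n + 1)).re| = n + 1 - z.re := by
    simp [abs_of_nonpos (by linarith : z.re - (n + 1) ≤ 0)]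
  have him : (z - (n + 1)).im = z.im := by simp
  exact him ▸ sq_norm_mem_Icc n.cast_nonneg (by linarith) (by linarith)

lemma norm_inv_add_inv_pair_le {r R : ℝ} (hr : 0 < r) {n : ℕ} (ha : z + n ∈ annulus r R)
    (hb : z - (n + 1) ∈ annulus r R) :
    ‖(z + n)⁻¹ + (z - (n + 1))⁻¹‖ ≤ 6 * (1 + 2 * |z.im|) * (((n : ℝ) + (|z.im| + r)) ^ 2)⁻¹ := by
  have hsum : ‖z + n + (z - (n + 1))‖ ≤ 1 + 2 * |z.im| := by
    refine (Complex.norm_le_abs_re_add_abs_im _).trans ?_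
    have hre : |(z + n + (z - (n + 1))).re| ≤ 1 := abs_le.2 ⟨by simp; linarith, by simp; linarith⟩
    have him : |(z + n + (z - (n + 1))).im| = 2 * |z.im| := by simp [← two_mul, abs_mul]
    linarith
  calc ‖(z + n)⁻¹ + (z - (n + 1))⁻¹‖
      ≤ 2 * ‖z + n + (z - (n + 1))‖ / (r ^ 2 + ((n : ℝ) ^ 2 + z.im ^ 2)) :=
        norm_inv_add_inv_le hr (by positivity) ha.1 hb.1
          (sq_norm_add_natCast_mem_Icc hz₀ hz₁ n).1 (sq_norm_sub_natCast_mem_Icc hz₀ hz₁ n).1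
    _ ≤ 6 * (1 + 2 * |z.im|) * (((n : ℝ) + (|z.im| + r)) ^ 2)⁻¹ := by
        rw [← div_eq_mul_inv, div_le_div_iff₀ (by positivity) (by positivity)]
        -- `(n + |y| + r)² ≤ 3 (n² + y² + r²)`
        nlinarith [sq_abs z.im, sq_nonneg ((n : ℝ) - |z.im|), sq_nonneg ((n : ℝ) - r),
          sq_nonneg (|z.im| - r), abs_nonneg z.im]

lemma norm_indicator_inv_pair_le {r : ℝ} (hr : 0 < r) (R : ℝ) (n : ℕ) :
    ‖(annulus r R).indicator (·⁻¹) (z + n) + (annulus r R).indicator (·⁻¹) (z - (n + 1))‖ ≤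
      6 * (1 + 2 * |z.im|) * (((n : ℝ) + (|z.im| + r)) ^ 2)⁻¹
        + (straddleSet z.im r).indicator (fun _ => r⁻¹) n
        + (straddleSet z.im R).indicator (fun _ => r⁻¹) n := by
  have hind (T : ℝ) : 0 ≤ (straddleSet z.im T).indicator (fun _ => r⁻¹) n :=
    indicator_nonneg (fun _ _ => by positivity) n
  have hmatched : 0 ≤ 6 * (1 + 2 * |z.im|) * (((n : ℝ) + (|z.im| + r)) ^ 2)⁻¹ := by positivity
  have ha := sq_norm_add_natCast_mem_Icc hz₀ hz₁ n
  have hb := sq_norm_sub_natCast_mem_Icc hz₀ hz₁ n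
  by_cases ha' : z + n ∈ annulus r R <;> by_cases hb' : z - (n + 1) ∈ annulus r R
  · rw [indicator_of_mem ha', indicator_of_mem hb']
    linarith [norm_inv_add_inv_pair_le hz₀ hz₁ hr ha' hb', hind r, hind R]
  · rw [indicator_of_mem ha', indicator_of_notMem hb', add_zero]
    linarith [norm_inv_le_indicator_straddleSet hr ha' hb' ha hb]
  · rw [indicator_of_notMem ha', indicator_of_mem hb', zero_add]
    linarith [norm_inv_le_indicator_straddleSet hr hb' ha' hb ha]
  · rw [indicator_of_notMem ha', indicator_of_notMem hb', add_zero, norm_zero]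
    linarith [hind r, hind R]

end Fibre

lemma summable_indicator_inv_annulus (z : ℂ) (r R : ℝ) :
    Summable fun n : ℤ => (annulus r R).indicator (·⁻¹) (z + n) := by
  refine summable_of_hasFiniteSupport
    ((Set.finite_Icc ⌊-R - z.re⌋ ⌈R - z.re⌉).subset fun n hn => ?_)
  have hmem : z + n ∈ annulus r R := by
    by_contra h
    exact hn (indicator_of_notMem h _)
  have hre := abs_lt.1 ((Complex.abs_re_le_norm _).trans_lt hmem.2)
  simp only [Complex.add_re, Complex.intCast_re] at hre
  exact ⟨Int.floor_le_iff.2 (by linarith), Int.le_ceil_iff.2 (by linarith)⟩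

noncomputable def fiberBound (r : ℝ) (z : ℂ) : ℝ := 12 * (1 + 2 * |z.im|) / (|z.im| + r) + 2 / r

lemma measurable_fiberBound (r : ℝ) : Measurable (fiberBound r) := by
  unfold fiberBound; fun_prop

lemma fiberBound_nonneg {r : ℝ} (hr : 0 < r) (z : ℂ) : 0 ≤ fiberBound r z := by
  unfold fiberBound; positivity

lemma norm_fiberBound_le {r : ℝ} (hr : 1 ≤ r) (z : ℂ) : ‖fiberBound r z‖ ≤ 26 := by
  have h₁ : 12 * (1 + 2 * |z.im|) / (|z.im| + r) ≤ 24 := by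
    rw [div_le_iff₀ (by positivity)]; nlinarith [abs_nonneg z.im]
  have h₂ : 2 / r ≤ 2 := by rw [div_le_iff₀ (by positivity)]; linarith
  rw [Real.norm_of_nonneg (fiberBound_nonneg (by linarith) z)]
  unfold fiberBound; linarith

lemma tendsto_fiberBound (z : ℂ) : Tendsto (fiberBound · z) atTop (𝓝 0) := by
  have h₁ := (tendsto_const_nhds (x := 12 * (1 + 2 * |z.im|))).div_atTop
    (tendsto_atTop_add_const_left _ |z.im| tendsto_id)
  have h₂ := (tendsto_const_nhds (x := (2 : ℝ))).div_atTop tendsto_id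
  simpa [fiberBound] using h₁.add h₂

theorem norm_tsum_indicator_inv_annulus_le {z : ℂ} (hz₀ : 0 ≤ z.re) (hz₁ : z.re ≤ 1) {r : ℝ}
    (hr : 1 ≤ r) (R : ℝ) :
    ‖∑' n : ℤ, (annulus r R).indicator (·⁻¹) (z + n)‖ ≤ fiberBound r z := by
  have ha : 1 ≤ |z.im| + r := by linarith [abs_nonneg z.im]
  have hM := (summable_inv_add_sq ha).mul_left (6 * (1 + 2 * |z.im|))
  have hr' := (straddleSet_subsingleton z.im r).summable_indicator_const r⁻¹
  have hR' := (straddleSet_subsingleton z.im R).summable_indicator_const r⁻¹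
  rw [← tsum_nat_add_neg_add_one (summable_indicator_inv_annulus z r R)]
  calc _ ≤ ∑' n : ℕ, 6 * (1 + 2 * |z.im|) * (((n : ℝ) + (|z.im| + r)) ^ 2)⁻¹
        + ∑' n, (straddleSet z.im r).indicator (fun _ => r⁻¹) n
        + ∑' n, (straddleSet z.im R).indicator (fun _ => r⁻¹) n :=
        tsum_of_norm_bounded ((hM.hasSum.add hr'.hasSum).add hR'.hasSum) fun n => by
          simpa [sub_eq_add_neg] using norm_indicator_inv_pair_le hz₀ hz₁ (by linarith) R n
    _ ≤ 6 * (1 + 2 * |z.im|) * (2 / (|z.im| + r)) + r⁻¹ + r⁻¹ := by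
        rw [tsum_mul_left]
        gcongr
        · exact tsum_inv_add_sq_le ha
        · exact (straddleSet_subsingleton z.im r).tsum_indicator_const_le (by positivity)
        · exact (straddleSet_subsingleton z.im R).tsum_indicator_const_le (by positivity)
    _ = fiberBound r z := by unfold fiberBound; ring

section Estimate

variable {μ : Measure ℂ} (hμ : MeasurePreserving (· + (1 : ℂ)) μ μ) (hfin : μ (strip 0) ≠ ⊤)
include hfin

lemma tendsto_setIntegral_fiberBound :
    Tendsto (fun r => ∫ z in strip 0, fiberBound r z ∂μ) atTop (𝓝 0) := by
  have : IsFiniteMeasure (μ.restrict (strip 0)) := isFiniteMeasure_restrict.2 hfin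
  simpa using tendsto_integral_filter_of_dominated_convergence (fun _ => (26 : ℝ))
    (Eventually.of_forall fun r => (measurable_fiberBound r).aestronglyMeasurable)
    ((eventually_ge_atTop 1).mono fun r hr => ae_of_all _ (norm_fiberBound_le hr))
    (integrable_const _) (ae_of_all _ tendsto_fiberBound)

include hμ

lemma norm_setIntegral_inv_annulus_le {r : ℝ} (hr : 1 ≤ r) (R : ℝ) :
    ‖∫ w in annulus r R, w⁻¹ ∂μ‖ ≤ ∫ z in strip 0, fiberBound r z ∂μ := by
  have : IsFiniteMeasure (μ.restrict (strip 0)) := isFiniteMeasure_restrict.2 hfin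
  rw [← integral_indicator (measurableSet_annulus r R), integral_eq_setIntegral_strip_tsum hμ
    ((integrableOn_inv_annulus hμ hfin (by linarith) R).integrable_indicator
      (measurableSet_annulus r R))]
  refine norm_integral_le_of_norm_le ((integrable_const (26 : ℝ)).mono'
    (measurable_fiberBound r).aestronglyMeasurable (ae_of_all _ (norm_fiberBound_le hr))) ?_
  filter_upwards [ae_restrict_mem (measurableSet_strip 0)] with z hz
  rw [strip_zero] at hz
  exact norm_tsum_indicator_inv_annulus_le hz.1 hz.2.le hr R

end Estimate

end PeriodicMeasure

open PeriodicMeasure in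
/-- For a measure `μ` on `ℂ` invariant under translation by `1` and finite on the
fundamental strip, the limit `lim_{R→∞} ∫_{1 ≤ |w| < R} dμ(w)/w` exists. -/
theorem stmt15 (μ : Measure ℂ) (hinv : Measure.map (fun z : ℂ => z + 1) μ = μ)
    (hfin : μ {z : ℂ | 0 ≤ z.re ∧ z.re < 1} ≠ ⊤) :
    ∃ L : ℂ, Tendsto
      (fun R : ℝ => ∫ w in {w : ℂ | 1 ≤ ‖w‖ ∧ ‖w‖ < R}, w⁻¹ ∂μ)
      atTop (nhds L) := by
  have hμ : MeasurePreserving (· + (1 : ℂ)) μ μ := ⟨measurable_add_const 1, hinv⟩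
  have hfin' : μ (strip 0) ≠ ⊤ := strip_zero ▸ hfin
  refine cauchySeq_tendsto_of_complete (Metric.cauchySeq_iff'.2 fun ε hε => ?_)
  obtain ⟨N, hN₁, hNε⟩ := ((eventually_ge_atTop 1).and
    ((tendsto_setIntegral_fiberBound hfin').eventually (gt_mem_nhds hε))).exists
  refine ⟨N, fun R hR => ?_⟩
  rw [dist_eq_norm]
  change ‖∫ w in annulus 1 R, w⁻¹ ∂μ - ∫ w in annulus 1 N, w⁻¹ ∂μ‖ < ε
  rw [setIntegral_inv_annulus_sub hμ hfin' one_pos hN₁ hR]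
  exact (norm_setIntegral_inv_annulus_le hμ hfin' hN₁ R).trans_lt hNε
end
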